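/- For j < D-1 and all eigenvalues negative and distinct, the partial derivative of S_j with respect to λ_D equals S_j·( -1/λ_D + (1/λ_D)·Σ_{i=1}^{j} λ_i/(λ_D − λ_i) ), where S_j is the j-th eigensignature. -/

import Mathlib

/-!
Logarithmic differentiation, done without dividing by the factors: if each factor `f` has
derivative `f x * g` at `x`, the product has derivative (product) * (sum of the `g`s).
The factors `c / -t` and `1 - λᵢ / t` have relative rates `-1 / t` and `(1 / t) * λᵢ / (t - λᵢ)`,
the latter needing `λᵢ ≠ λ_D`.
-/

variable {𝕜 : Type*} [NontriviallyNormedField 𝕜] {x : 𝕜}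

theorem HasDerivAt.mul_of_deriv_eq_mul {u v : 𝕜 → 𝕜} {α β : 𝕜}
    (hu : HasDerivAt u (u x * α) x) (hv : HasDerivAt v (v x * β) x) :
    HasDerivAt (fun t => u t * v t) (u x * v x * (α + β)) x :=
  (hu.mul hv).congr_deriv (by ring)

theorem HasDerivAt.finset_prod_of_deriv_eq_mul {ι : Type*} {s : Finset ι} {f : ι → 𝕜 → 𝕜}
    {g : ι → 𝕜} (hf : ∀ i ∈ s, HasDerivAt (f i) (f i x * g i) x) :
    HasDerivAt (fun t => ∏ i ∈ s, f i t) ((∏ i ∈ s, f i x) * ∑ i ∈ s, g i) x := by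
  classical
  induction s using Finset.induction_on with
  | empty => simpa using hasDerivAt_const x (1 : 𝕜)
  | insert i s hi ih =>
    simp only [Finset.prod_insert hi, Finset.sum_insert hi]
    exact (hf i (s.mem_insert_self i)).mul_of_deriv_eq_mul
      (ih fun k hk => hf k (Finset.mem_insert_of_mem hk))

theorem hasDerivAt_div_neg (c : 𝕜) (hx : x ≠ 0) :
    HasDerivAt (fun t => c / -t) (c / -x * (-1 / x)) x := by
  refine ((hasDerivAt_const x c).fun_div (hasDerivAt_id' x).fun_neg
    (neg_ne_zero.mpr hx)).congr_deriv ?_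
  field_simp
  ring

theorem hasDerivAt_one_sub_div {a : 𝕜} (hx : x ≠ 0) (ha : a ≠ x) :
    HasDerivAt (fun t => 1 - a / t) ((1 - a / x) * (1 / x * (a / (x - a)))) x := by
  refine ((hasDerivAt_const x a).fun_div (hasDerivAt_id' x) hx).const_sub 1 |>.congr_deriv ?_
  have hxa : x - a ≠ 0 := sub_ne_zero.mpr ha.symm
  field_simp
  ring

/-- For j < D-1 and all eigenvalues negative and distinct,
∂S_j/∂λ_D = S_j·(−1/λ_D + (1/λ_D)·Σ_{i=1}^{j} λ_i/(λ_D − λ_i)), where on the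
region of strictly negative eigenvalues
S_j = (λ_{j+1}²/(−λ_D))·∏_{i=1}^{j}(1 − λ_i/λ_D). -/
theorem stmt10 (D j : ℕ) (lam : ℕ → ℝ) (hj : j + 1 < D)
    (hneg : ∀ i, 1 ≤ i → i ≤ D → lam i < 0)
    (hdist : ∀ i k, 1 ≤ i → i ≤ D → 1 ≤ k → k ≤ D → i ≠ k → lam i ≠ lam k) :
    HasDerivAt
      (fun t : ℝ => (lam (j + 1)) ^ 2 / (-t) * ∏ i ∈ Finset.Icc 1 j, (1 - lam i / t))
      (((lam (j + 1)) ^ 2 / (-(lam D)) * ∏ i ∈ Finset.Icc 1 j, (1 - lam i / lam D)) *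
        (-1 / lam D + (1 / lam D) * ∑ i ∈ Finset.Icc 1 j, lam i / (lam D - lam i)))
      (lam D) := by
  have hD : lam D ≠ 0 := (hneg D (by omega) le_rfl).ne
  have hprod : HasDerivAt (fun t : ℝ => ∏ i ∈ Finset.Icc 1 j, (1 - lam i / t))
      ((∏ i ∈ Finset.Icc 1 j, (1 - lam i / lam D)) *
        ∑ i ∈ Finset.Icc 1 j, 1 / lam D * (lam i / (lam D - lam i))) (lam D) :=
    HasDerivAt.finset_prod_of_deriv_eq_mul fun i hi => by
      obtain ⟨hi1, hij⟩ := Finset.mem_Icc.mp hi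
      exact hasDerivAt_one_sub_div hD (hdist i D hi1 (by omega) (by omega) le_rfl (by omega))
  rw [← Finset.mul_sum] at hprod
  exact (hasDerivAt_div_neg _ hD).mul_of_deriv_eq_mul hprod
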